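/- arXiv:2305.14333 — 2 statements merged into one kernel-verified Lean document; each statement's English description precedes it below -/
import Mathlib

section
/- Under the hypotheses of the error decomposition (finite X, functions p1, p2, ρ with values in [0,1], R = p2 − p1, q(x) = ρ(x)·𝟙[R(x)≥0] + (1−ρ(x))·𝟙[R(x)<0], err1 and err defined as before): if ∑_{x∈X} |R(x)|·(ρ(x) − 𝟙[R(x) < 0]) > 0, then err < err1. -/
theorem stmt_3 (X : Type*) [Fintype X] [Nonempty X]
    (p1 p2 ρ : X → ℝ)
    (hp1 : ∀ x, p1 x ∈ Set.Icc (0:ℝ) 1)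
    (hp2 : ∀ x, p2 x ∈ Set.Icc (0:ℝ) 1)
    (hρ : ∀ x, ρ x ∈ Set.Icc (0:ℝ) 1)
    (R q : X → ℝ)
    (hR : ∀ x, R x = p2 x - p1 x)
    (hq : ∀ x, q x = ρ x * (if 0 ≤ R x then (1:ℝ) else 0)
        + (1 - ρ x) * (if R x < 0 then (1:ℝ) else 0))
    (err err1 : ℝ)
    (herr1 : err1 = 1 - (1 / (Fintype.card X : ℝ)) * ∑ x, p1 x)
    (herr : err = 1 - (1 / (Fintype.card X : ℝ)) *
      ∑ x, (q x * p2 x + (1 - q x) * p1 x))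
    (hpos : 0 < ∑ x, |R x| * (ρ x - (if R x < 0 then (1:ℝ) else 0))) :
    err < err1 := by
  have key : ∀ x, q x * p2 x + (1 - q x) * p1 x
      = p1 x + |R x| * (ρ x - (if R x < 0 then (1:ℝ) else 0)) := by
    intro x
    rcases le_or_gt 0 (R x) with h | h
    · rw [hq x, if_pos h, if_neg (not_lt.mpr h), abs_of_nonneg h, hR x]
      ring
    · rw [hq x, if_neg (not_le.mpr h), if_pos h, abs_of_neg h, hR x]
      ring
  have hsum : ∑ x, (q x * p2 x + (1 - q x) * p1 x)
      = (∑ x, p1 x) + ∑ x, |R x| * (ρ x - (if R x < 0 then (1:ℝ) else 0)) := by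
    rw [← Finset.sum_add_distrib]
    exact Finset.sum_congr rfl fun x _ => key x
  have hc : (0:ℝ) < (Fintype.card X : ℝ) := by
    exact_mod_cast Fintype.card_pos
  rw [herr, herr1, hsum]
  have : 0 < (1 / (Fintype.card X : ℝ)) *
      ∑ x, |R x| * (ρ x - (if R x < 0 then (1:ℝ) else 0)) :=
    mul_pos (by positivity) hpos
  nlinarith
end

section
/- For every ε' ∈ (0,1) there exist a finite nonempty set X, functions p1, p2, ρ : X → ℝ with values in [0,1] (defining R = p2 − p1, q(x) = ρ(x)·𝟙[R(x)≥0] + (1−ρ(x))·𝟙[R(x)<0], err1 = 1 − (1/|X|)∑ p1, err2 = 1 − (1/|X|)∑ p2, and err = 1 − (1/|X|)∑ (q·p2 + (1−q)·p1)) such that err < err1, err1 ≤ err2, and the average selection success probability (1/|X|)·∑_{x∈X} ρ(x) is less than ε'. -/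
lemma sum_split_aux (m : ℕ) (f : Fin (m+1) → ℝ) (a c : ℝ) (h0 : f 0 = a)
    (hs : ∀ i : Fin m, f i.succ = c) : ∑ x, f x = a + m * c := by
  rw [Fin.sum_univ_succ, h0]
  simp [hs, Finset.sum_const, nsmul_eq_mul]

theorem stmt_10 (ε' : ℝ) (hε' : ε' ∈ Set.Ioo (0:ℝ) 1) :
    ∃ (n : ℕ) (_ : 0 < n) (p1 p2 ρ : Fin n → ℝ),
      (∀ x, p1 x ∈ Set.Icc (0:ℝ) 1) ∧
      (∀ x, p2 x ∈ Set.Icc (0:ℝ) 1) ∧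
      (∀ x, ρ x ∈ Set.Icc (0:ℝ) 1) ∧
      (1 - (1 / (n : ℝ)) * ∑ x,
          ((ρ x * (if 0 ≤ p2 x - p1 x then (1:ℝ) else 0)
            + (1 - ρ x) * (if p2 x - p1 x < 0 then (1:ℝ) else 0)) * p2 x
          + (1 - (ρ x * (if 0 ≤ p2 x - p1 x then (1:ℝ) else 0)
            + (1 - ρ x) * (if p2 x - p1 x < 0 then (1:ℝ) else 0))) * p1 x)
        < 1 - (1 / (n : ℝ)) * ∑ x, p1 x) ∧
      (1 - (1 / (n : ℝ)) * ∑ x, p1 x ≤ 1 - (1 / (n : ℝ)) * ∑ x, p2 x) ∧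
      ((1 / (n : ℝ)) * ∑ x, ρ x < ε') := by
  obtain ⟨hε0, hε1⟩ := hε'
  set m : ℕ := ⌈2/ε'⌉₊ with hmdef
  have hm1 : (2:ℝ)/ε' ≤ m := Nat.le_ceil _
  have hmpos : 0 < m := Nat.ceil_pos.mpr (by positivity)
  set M : ℝ := (m : ℝ) with hMdef
  have hM : 0 < M := by rw [hMdef]; exact_mod_cast hmpos
  have hM1 : 1 ≤ M := by rw [hMdef]; exact_mod_cast hmpos
  have hMe : 2 ≤ M * ε' := by
    rw [div_le_iff₀ hε0] at hm1; linarith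
  have h4 : (1:ℝ)/(4*M) ≤ 1/4 := by
    rw [div_le_div_iff₀ (by positivity) (by norm_num)]; linarith
  have h4pos : (0:ℝ) < 1/(4*M) := by positivity
  refine ⟨m + 1, Nat.succ_pos _, (fun _ => 1/2),
    (fun x => if x.val = 0 then 1/4 else 1/2 + 1/(4*M)),
    (fun x => if x.val = 0 then 1 else ε'/2), ?_, ?_, ?_, ?_, ?_, ?_⟩
  · intro x; constructor <;> norm_num
  · intro x
    by_cases h : x.val = 0
    · simp only [h, if_pos]; constructor <;> norm_num
    · simp only [h, if_neg, if_false]; constructor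
      · positivity
      · linarith
  · intro x
    by_cases h : x.val = 0
    · simp [h]
    · simp only [h, if_neg, if_false]; constructor <;> linarith
  all_goals {
    have hcast : ((m + 1 : ℕ) : ℝ) = M + 1 := by rw [hMdef]; push_cast; ring
    have hRpos : (0:ℝ) ≤ (1/2 + 1/(4*M)) - 1/2 := by linarith
    have hsum1 : ∑ x : Fin (m+1), (1/2 : ℝ) = 1/2 + M * (1/2) :=
      sum_split_aux m _ _ _ rfl (fun i => rfl)
    have hsum2 : (∑ x : Fin (m+1),
        (if (x : Fin (m+1)).val = 0 then (1/4 : ℝ) else 1/2 + 1/(4*M)))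
        = 1/4 + M * (1/2 + 1/(4*M)) := by
      apply sum_split_aux m _ _ _ (by simp)
      intro i; simp [Fin.val_succ]
    have hsum3 : (∑ x : Fin (m+1),
        (if (x : Fin (m+1)).val = 0 then (1:ℝ) else ε'/2))
        = 1 + M * (ε'/2) := by
      apply sum_split_aux m _ _ _ (by simp)
      intro i; simp [Fin.val_succ]
    have hsumc : (∑ x : Fin (m+1),
        (((if (x : Fin (m+1)).val = 0 then (1:ℝ) else ε'/2) *
              (if 0 ≤ (if (x : Fin (m+1)).val = 0 then (1/4:ℝ) else 1/2 + 1/(4*M)) - 1/2 then (1:ℝ) else 0)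
            + (1 - (if (x : Fin (m+1)).val = 0 then (1:ℝ) else ε'/2)) *
              (if (if (x : Fin (m+1)).val = 0 then (1/4:ℝ) else 1/2 + 1/(4*M)) - 1/2 < 0 then (1:ℝ) else 0)) *
              (if (x : Fin (m+1)).val = 0 then (1/4:ℝ) else 1/2 + 1/(4*M))
          + (1 - ((if (x : Fin (m+1)).val = 0 then (1:ℝ) else ε'/2) *
              (if 0 ≤ (if (x : Fin (m+1)).val = 0 then (1/4:ℝ) else 1/2 + 1/(4*M)) - 1/2 then (1:ℝ) else 0)
            + (1 - (if (x : Fin (m+1)).val = 0 then (1:ℝ) else ε'/2)) *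
              (if (if (x : Fin (m+1)).val = 0 then (1/4:ℝ) else 1/2 + 1/(4*M)) - 1/2 < 0 then (1:ℝ) else 0))) * (1/2)))
        = 1/2 + M * ((ε'/2) * (1/2 + 1/(4*M)) + (1 - ε'/2) * (1/2)) := by
      apply sum_split_aux m _ _ _ ?_ ?_
      · norm_num
      · intro i
        simp only [Fin.val_succ, Nat.succ_ne_zero, if_false,
          if_pos hRpos, if_neg (not_lt.mpr hRpos)]
        ring
    first
    | (simp only [hsumc, hsum1, hcast]
       have hinv : 0 < 1 / (M + 1) := by positivity
       have key : M * ((ε'/2) * (1/2 + 1/(4*M)) + (1 - ε'/2) * (1/2))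
           = M * (1/2) + ε'/8 := by field_simp; ring
       rw [key]
       have := mul_lt_mul_of_pos_left
         (show 1/2 + M * (1/2) < 1/2 + (M * (1/2) + ε'/8) by linarith) hinv
       linarith)
    | (simp only [hsum1, hsum2, hcast]
       have key : (1/4 : ℝ) + M * (1/2 + 1/(4*M)) = 1/2 + M * (1/2) := by
         field_simp; ring
       rw [key])
    | (simp only [hsum3, hcast]
       rw [div_mul_eq_mul_div, div_lt_iff₀ (by linarith : (0:ℝ) < M + 1)]
       nlinarith)
  }
end
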